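/- For interior indices, the one-dimensional pre-wavelet φ_{t,i} = v_{t,i} − (3/5)(v_{t,i+1} + v_{t,i−1}) + (1/10)(v_{t,i+2} + v_{t,i−2}) of level t ≥ 1 is L²-orthogonal on [0,1] to every piecewise-linear nodal basis function v_{t−1,j} of level t−1, i.e. ∫₀¹ φ_{t,i}(x) v_{t−1,j}(x) dx = 0 for all j ∈ I_{t−1}. -/

import Mathlib

open MeasureTheory intervalIntegral

/-- The one-dimensional piecewise linear nodal (hat) basis function of level `t`
at node `2^{-(t+1)} i`, with mesh size `2^{-(t+1)}`. -/
noncomputable def hat (t i : ℕ) (x : ℝ) : ℝ :=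
  max 0 (1 - |x * 2 ^ (t + 1) - (i : ℝ)|)

/-!
Every hat function is a dilated translate of the tent `Λ u = max 0 (1 - |u|)`, and the two-scale
relation `Λ (s / 2) = Λ (s + 1) / 2 + Λ s + Λ (s - 1) / 2` writes a coarse hat on the fine grid.
Because the five fine hats making up the pre-wavelet are supported inside `[0, 1]`, each product
integral is, after rescaling by `2^(t+1)`, the autocorrelation `∫ Λ u * Λ (u - d) du` at an integer
shift `d`, which is `2/3`, `1/6` or `0` according as `|d| = 0`, `1` or `≥ 2`. Orthogonality becomes
a finite identity between the two masks and these Gram entries, which only has to be checked for the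
four relative positions of the odd node `i` and the even node `2j` at which some entry survives.
-/

open Set

noncomputable def tent (u : ℝ) : ℝ := max 0 (1 - |u|)

lemma hat_eq_tent (t i : ℕ) (x : ℝ) : hat t i x = tent (x * 2 ^ (t + 1) - i) := rfl

@[fun_prop] lemma continuous_tent : Continuous tent := by unfold tent; fun_prop

lemma tent_neg (u : ℝ) : tent (-u) = tent u := by rw [tent, abs_neg, tent]

lemma tent_of_nonneg {u : ℝ} (h₀ : 0 ≤ u) (h₁ : u ≤ 1) : tent u = 1 - u := by
  rw [tent, abs_of_nonneg h₀, max_eq_right (by linarith)]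

lemma tent_of_nonpos {u : ℝ} (h₀ : -1 ≤ u) (h₁ : u ≤ 0) : tent u = 1 + u := by
  rw [tent, abs_of_nonpos h₁, max_eq_right (by linarith)]; ring

lemma abs_lt_one_of_tent_ne_zero {u : ℝ} (h : tent u ≠ 0) : |u| < 1 := by
  by_contra! hu
  exact h (by rw [tent, max_eq_left (by linarith)])

lemma tent_two_scale (s : ℝ) : tent (s / 2) = tent (s + 1) / 2 + tent s + tent (s - 1) / 2 := by
  unfold tent; grind

noncomputable def tentAutocorr (d : ℝ) : ℝ := ∫ u, tent u * tent (u - d)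

lemma tentAutocorr_eq_intervalIntegral {a b d : ℝ} (ha : a ≤ max (-1) (d - 1))
    (hb : min 1 (d + 1) ≤ b) : tentAutocorr d = ∫ u in a..b, tent u * tent (u - d) := by
  refine (integral_eq_integral_of_support_subset fun u hu => ?_).symm
  have h₀ := abs_lt_one_of_tent_ne_zero (left_ne_zero_of_mul hu)
  have h₁ := abs_lt_one_of_tent_ne_zero (right_ne_zero_of_mul hu)
  rw [abs_lt] at h₀ h₁
  exact ⟨ha.trans_lt (max_lt (by linarith) (by linarith)),
    (le_min (by linarith) (by linarith)).trans hb⟩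

lemma tentAutocorr_neg (d : ℝ) : tentAutocorr (-d) = tentAutocorr d := by
  rw [tentAutocorr, ← integral_neg_eq_self]
  congr 1 with u
  rw [tent_neg, show -u - -d = -(u - d) by ring, tent_neg]

lemma tentAutocorr_of_two_le_abs {d : ℝ} (hd : 2 ≤ |d|) : tentAutocorr d = 0 := by
  rw [tentAutocorr, ← integral_zero ℝ ℝ]
  congr 1 with u
  by_contra h
  have h₀ := abs_lt_one_of_tent_ne_zero (left_ne_zero_of_mul h)
  have h₁ := abs_lt_one_of_tent_ne_zero (right_ne_zero_of_mul h)
  have := abs_sub_abs_le_abs_sub d u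
  rw [abs_sub_comm] at h₁
  linarith

lemma tentAutocorr_zero : tentAutocorr 0 = 2 / 3 := by
  have hint (a b : ℝ) : IntervalIntegrable (fun u => tent u * tent (u - 0)) volume a b :=
    (by fun_prop : Continuous _).intervalIntegrable a b
  rw [tentAutocorr_eq_intervalIntegral (a := -1) (b := 1) (by norm_num) (by norm_num),
    ← integral_add_adjacent_intervals (hint (-1) 0) (hint 0 1),
    integral_congr (g := fun u => (1 + u) ^ 2) fun u hu => ?_,
    integral_congr (a := 0) (g := fun u => (1 - u) ^ 2) fun u hu => ?_]
  · rw [integral_comp_add_left (fun u => u ^ 2), integral_comp_sub_left (fun u => u ^ 2)]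
    norm_num
  · rw [uIcc_of_le zero_le_one] at hu
    simp only [sub_zero, tent_of_nonneg hu.1 hu.2, sq]
  · rw [uIcc_of_le (by norm_num)] at hu
    simp only [sub_zero, tent_of_nonpos hu.1 hu.2, sq]

lemma tentAutocorr_one : tentAutocorr 1 = 1 / 6 := by
  rw [tentAutocorr_eq_intervalIntegral (a := 0) (b := 1) (by norm_num) (by norm_num),
    integral_congr (g := fun u => u - u ^ 2) fun u hu => ?_,
    integral_sub intervalIntegrable_id (intervalIntegrable_pow 2)]
  · norm_num [integral_pow]
  · rw [uIcc_of_le zero_le_one] at hu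
    simp only
    rw [tent_of_nonneg hu.1 hu.2, tent_of_nonpos (by linarith [hu.1]) (by linarith [hu.2])]
    ring

noncomputable def tentGram (n : ℤ) : ℝ :=
  if n = 0 then 2 / 3 else if n = 1 ∨ n = -1 then 1 / 6 else 0

lemma tentAutocorr_intCast (n : ℤ) : tentAutocorr n = tentGram n := by
  unfold tentGram
  split_ifs with h₀ h₁
  · rw [h₀, Int.cast_zero, tentAutocorr_zero]
  · rcases h₁ with rfl | rfl
    · rw [Int.cast_one, tentAutocorr_one]
    · rw [Int.cast_neg, Int.cast_one, tentAutocorr_neg, tentAutocorr_one]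
  · apply tentAutocorr_of_two_le_abs
    have : (2 : ℤ) ≤ |n| := by rw [le_abs]; omega
    exact_mod_cast this

lemma integral_tent_mul_tent {c a : ℝ} (hc : 0 < c) (ha : 1 ≤ a) (ha' : a ≤ c - 1) (b : ℝ) :
    ∫ x in (0:ℝ)..1, tent (x * c - a) * tent (x * c - b) = c⁻¹ * tentAutocorr (b - a) := by
  rw [integral_comp_mul_right (fun u => tent (u - a) * tent (u - b)) hc.ne', smul_eq_mul,
    zero_mul, one_mul]
  have hshift (u : ℝ) : tent (u - a) * tent (u - b) = tent (u - a) * tent (u - a - (b - a)) := by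
    ring_nf
  simp_rw [hshift]
  rw [integral_comp_sub_right (fun v => tent v * tent (v - (b - a))),
    tentAutocorr_eq_intervalIntegral (a := 0 - a) (b := c - a) (by simp; left; linarith)
      (by simp; left; linarith)]

lemma integral_sum_tent_mul_sum_tent {ι κ : Type*} [Fintype ι] [Fintype κ] {c : ℝ} (hc : 0 < c)
    (α a : ι → ℝ) (ha : ∀ k, 1 ≤ a k ∧ a k ≤ c - 1) (β b : κ → ℝ) :
    ∫ x in (0:ℝ)..1, (∑ k, α k * tent (x * c - a k)) * ∑ l, β l * tent (x * c - b l)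
      = c⁻¹ * ∑ k, ∑ l, α k * β l * tentAutocorr (b l - a k) := by
  have hterm (k : ι) (l : κ) (x : ℝ) : α k * tent (x * c - a k) * (β l * tent (x * c - b l))
      = α k * β l * (tent (x * c - a k) * tent (x * c - b l)) := by ring
  simp_rw [Finset.sum_mul_sum, hterm, Finset.mul_sum]
  rw [intervalIntegral.integral_finsetSum fun k _ => ?_]
  · refine Finset.sum_congr rfl fun k _ => ?_
    rw [intervalIntegral.integral_finsetSum fun l _ => ?_]
    · refine Finset.sum_congr rfl fun l _ => ?_
      rw [intervalIntegral.integral_const_mul, integral_tent_mul_tent hc (ha k).1 (ha k).2]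
      ring
    · exact (by fun_prop : Continuous _).intervalIntegrable _ _
  · exact (by fun_prop : Continuous _).intervalIntegrable _ _

-- `prewaveletMask k` is the coefficient of the fine hat at node `i + k - 2` in the pre-wavelet `i`.
noncomputable def prewaveletMask : Fin 5 → ℝ := ![1 / 10, -3 / 5, 1, -3 / 5, 1 / 10]

-- `twoScaleMask l` is the coefficient of the fine hat at node `2 * j + l - 1` in coarse hat `j`.
noncomputable def twoScaleMask : Fin 3 → ℝ := ![1 / 2, 1, 1 / 2]

lemma prewavelet_eq_sum_tent (t i : ℕ) (hi : 2 ≤ i) (x : ℝ) :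
    hat t i x - 3/5 * (hat t (i+1) x + hat t (i-1) x) + 1/10 * (hat t (i+2) x + hat t (i-2) x)
      = ∑ k, prewaveletMask k * tent (x * 2 ^ (t + 1) - (i + k - 2)) := by
  simp only [hat_eq_tent, Fin.sum_univ_five, prewaveletMask, Matrix.cons_val, Fin.coe_ofNat_eq_mod,
    Nat.reduceMod, Nat.cast_add, Nat.cast_sub hi, Nat.cast_sub (by omega : 1 ≤ i)]
  ring_nf

lemma hat_pred_eq_sum_tent {t : ℕ} (ht : 1 ≤ t) (j : ℕ) (x : ℝ) :
    hat (t - 1) j x = ∑ l, twoScaleMask l * tent (x * 2 ^ (t + 1) - (2 * j + l - 1)) := by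
  rw [hat_eq_tent, Nat.sub_add_cancel ht,
    show x * 2 ^ t - j = (x * 2 ^ (t + 1) - 2 * j) / 2 by rw [pow_succ]; ring, tent_two_scale]
  simp only [Fin.sum_univ_three, twoScaleMask, Matrix.cons_val, Fin.val_zero, Fin.val_one,
    Fin.val_two]
  ring_nf

lemma sum_prewaveletMask_twoScaleMask_tentGram_eq_zero (n : ℤ) :
    ∑ k, ∑ l, prewaveletMask k * twoScaleMask l * tentGram (2 * n + l - k) = 0 := by
  by_cases hn : -1 ≤ n ∧ n ≤ 2
  · obtain ⟨h₁, h₂⟩ := hn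
    interval_cases n <;>
      simp [Fin.sum_univ_five, Fin.sum_univ_three, prewaveletMask, twoScaleMask, tentGram] <;>
      norm_num
  · refine Finset.sum_eq_zero fun k _ => Finset.sum_eq_zero fun l _ => ?_
    have := k.isLt
    have := l.isLt
    rw [tentGram, if_neg (by omega), if_neg (by omega), mul_zero]

theorem prewavelet_orth_coarse_hat (t i : ℕ) (ht : 1 ≤ t) (hodd : Odd i)
    (hlo : 3 ≤ i) (hhi : i ≤ 2 ^ (t + 1) - 3) :
    ∀ j : ℕ, 1 ≤ j → j ≤ 2 ^ t - 1 →
      ∫ x in (0:ℝ)..1,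
        (hat t i x - 3/5 * (hat t (i+1) x + hat t (i-1) x)
          + 1/10 * (hat t (i+2) x + hat t (i-2) x)) * hat (t-1) j x = 0 := by
  intro j _ _
  obtain ⟨m, hm⟩ := hodd
  have hnodes (k : Fin 5) : 1 ≤ (i + k - 2 : ℝ) ∧ (i + k - 2 : ℝ) ≤ 2 ^ (t + 1) - 1 := by
    have hi : (3 : ℝ) ≤ i := by exact_mod_cast hlo
    have hi' : (i + 3 : ℝ) ≤ 2 ^ (t + 1) := by exact_mod_cast (by omega : i + 3 ≤ 2 ^ (t + 1))
    have hk : (k : ℝ) ≤ 4 := by exact_mod_cast (by omega : (k : ℕ) ≤ 4)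
    constructor <;> linarith [(by positivity : (0 : ℝ) ≤ k)]
  have hshift (k : Fin 5) (l : Fin 3) :
      (2 * j + l - 1 : ℝ) - (i + k - 2) = ((2 * ((j : ℤ) - m) + l - k : ℤ) : ℝ) := by
    rw [hm]; push_cast; ring
  simp_rw [prewavelet_eq_sum_tent t i (by omega), hat_pred_eq_sum_tent ht]
  rw [integral_sum_tent_mul_sum_tent (by positivity) _ _ hnodes]
  simp_rw [hshift, tentAutocorr_intCast, sum_prewaveletMask_twoScaleMask_tentGram_eq_zero, mul_zero]
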